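/- (Bisimulation invariance for PDL_REwLA+.) Let S₁ and S₂ be generalized structures whose universal relations are of the form R ∪ id for a strict partial order R (so in particular each term-variable interpretation aˢ is irreflexive), and let Z be a bisimulation between S₁ and S₂. Then for every PDL_REwLA+ expression and every (x,y) ∈ Z: (1) for every formula φ, x ∈ ⟦φ⟧^{S₁} iff y ∈ ⟦φ⟧^{S₂}; (2) for every term e, if (x,x') ∈ ⟦e⟧^{S₁} then there exists y' with (y,y') ∈ ⟦e⟧^{S₂} and (x',y') ∈ Z; (3) for every term e, if (y,y') ∈ ⟦e⟧^{S₂} then there exists x' with (x,x') ∈ ⟦e⟧^{S₁} and (x',y') ∈ Z. -/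
import Mathlib


/-! Statement 19: bisimulation invariance for PDL_REwLA+ over structures whose
universal relation is a strict partial order together with the identity. -/

/-- A generalized structure over term variables `A` and formula variables `P`,
with universe `W`. -/
structure GStruct (A P W : Type) where
  U : W → W → Prop
  rel : A → W → W → Prop
  rel_sub : ∀ a x y, rel a x y → U x y
  val : P → W → Prop

/-- The universal relation is a finite linear order (on a nonempty finite universe). -/
def FinLin {A P W : Type} (S : GStruct A P W) : Prop :=
  Nonempty W ∧ Finite W ∧ (∀ x, S.U x x) ∧
    (∀ x y z, S.U x y → S.U y z → S.U x z) ∧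
    (∀ x y, S.U x y → S.U y x → x = y) ∧ (∀ x y, S.U x y ∨ S.U y x)

/-- The universal relation is a finite strict linear order
(on a nonempty finite universe). -/
def SFinLin {A P W : Type} (S : GStruct A P W) : Prop :=
  Nonempty W ∧ Finite W ∧ (∀ x, ¬ S.U x x) ∧
    (∀ x y z, S.U x y → S.U y z → S.U x z) ∧
    (∀ x y, x ≠ y → S.U x y ∨ S.U y x)
mutual
  /-- Formulas of PDL for REwLA+. -/
  inductive Fml (A P : Type) : Type where
    | pv : P → Fml A P
    | imp : Fml A P → Fml A P → Fml A P
    | fls : Fml A P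
    | box : Trm A P → Fml A P → Fml A P
  /-- Terms of PDL for REwLA+. -/
  inductive Trm (A P : Type) : Type where
    | tv : A → Trm A P
    | comp : Trm A P → Trm A P → Trm A P
    | union : Trm A P → Trm A P → Trm A P
    | plus : Trm A P → Trm A P
    | adom : Trm A P → Trm A P
    | capId : Trm A P → Trm A P
    | capNid : Trm A P → Trm A P
    | test : Fml A P → Trm A P
end

namespace Fml
/-- ¬φ := φ → F -/
def neg {A P : Type} (φ : Fml A P) : Fml A P := .imp φ .fls
/-- T := ¬F -/
def tru {A P : Type} : Fml A P := neg .fls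
/-- φ ∨ ψ := ¬φ → ψ -/
def or {A P : Type} (φ ψ : Fml A P) : Fml A P := .imp (neg φ) ψ
/-- φ ∧ ψ := ¬(¬φ ∨ ¬ψ) -/
def and {A P : Type} (φ ψ : Fml A P) : Fml A P := neg (or (neg φ) (neg ψ))
/-- φ ↔ ψ := (φ → ψ) ∧ (ψ → φ) -/
def iff {A P : Type} (φ ψ : Fml A P) : Fml A P := and (.imp φ ψ) (.imp ψ φ)
/-- ⟨e⟩φ := ¬[e]¬φ -/
def dia {A P : Type} (e : Trm A P) (φ : Fml A P) : Fml A P := neg (.box e (neg φ))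
end Fml

mutual
  /-- Semantics of PDL_REwLA+ formulas on a generalized structure. -/
  def semF {A P W : Type} (S : GStruct A P W) : Fml A P → W → Prop
    | .pv p, x => S.val p x
    | .imp φ ψ, x => semF S φ x → semF S ψ x
    | .fls, _ => False
    | .box e φ, x => ∀ y, semT S e x y → semF S φ y
  /-- Semantics of PDL_REwLA+ terms on a generalized structure. -/
  def semT {A P W : Type} (S : GStruct A P W) : Trm A P → W → W → Prop
    | .tv a, x, y => S.rel a x y
    | .comp e f, x, z => ∃ y, semT S e x y ∧ semT S f y z
    | .union e f, x, y => semT S e x y ∨ semT S f x y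
    | .plus e, x, y => Relation.TransGen (fun u v => semT S e u v) x y
    | .adom e, x, y => x = y ∧ ∀ z, ¬ semT S e x z
    | .capId e, x, y => semT S e x y ∧ x = y
    | .capNid e, x, y => semT S e x y ∧ x ≠ y
    | .test φ, x, y => x = y ∧ semF S φ x
end

/-- The universal relation equals `R ∪ id` for some strict partial order `R`
(irreflexive and transitive), and every term-variable interpretation is
contained in `R` (hence irreflexive). -/
def StrictPlusId {A P W : Type} (S : GStruct A P W) : Prop :=
  ∃ R : W → W → Prop, (∀ x, ¬ R x x) ∧ (∀ x y z, R x y → R y z → R x z) ∧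
    (∀ x y, S.U x y ↔ (R x y ∨ x = y)) ∧ (∀ a x y, S.rel a x y → R x y)

/-- A bisimulation between two generalized structures. -/
def Bisim {A P W₁ W₂ : Type} (S₁ : GStruct A P W₁) (S₂ : GStruct A P W₂)
    (Z : W₁ → W₂ → Prop) : Prop :=
  ∀ x y, Z x y →
    (∀ p, S₁.val p x ↔ S₂.val p y) ∧
    (∀ a x', S₁.rel a x x' → ∃ y', S₂.rel a y y' ∧ Z x' y') ∧
    (∀ a y', S₂.rel a y y' → ∃ x', S₁.rel a x x' ∧ Z x' y')


section Aux

lemma transgen_sub {W : Type} (R T : W → W → Prop)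
    (htr : ∀ x y z, R x y → R y z → R x z)
    (hsub : ∀ x y, T x y → R x y ∨ x = y) :
    ∀ x y, Relation.TransGen T x y → R x y ∨ x = y := by
  intro x y h
  induction h with
  | single h => exact hsub _ _ h
  | tail _ h ih =>
    rcases ih with h1 | rfl
    · rcases hsub _ _ h with h2 | rfl
      · exact Or.inl (htr _ _ _ h1 h2)
      · exact Or.inl h1
    · exact hsub _ _ h

lemma eq_of_chain {W : Type} (R : W → W → Prop)
    (hirr : ∀ x, ¬ R x x) (htr : ∀ a b c, R a b → R b c → R a c)
    {x m : W} (h1 : R x m ∨ x = m) (h2 : R m x ∨ m = x) : x = m := by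
  by_contra hne
  rcases h1 with hr1 | h1e
  · rcases h2 with hr2 | h2e
    · exact hirr x (htr _ _ _ hr1 hr2)
    · exact hirr x (h2e ▸ hr1)
  · exact hne h1e

lemma eq_comp {W₁ W₂ : Type} (R₁ : W₁ → W₁ → Prop) (R₂ : W₂ → W₂ → Prop)
    (hirr₁ : ∀ x, ¬ R₁ x x) (hirr₂ : ∀ x, ¬ R₂ x x)
    (htr₁ : ∀ a b c, R₁ a b → R₁ b c → R₁ a c)
    (htr₂ : ∀ a b c, R₂ a b → R₂ b c → R₂ a c)
    {x m x' : W₁} {y m' y' : W₂}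
    (h1 : R₁ x m ∨ x = m) (h2 : R₁ m x' ∨ m = x')
    (h3 : R₂ y m' ∨ y = m') (h4 : R₂ m' y' ∨ m' = y')
    (e1 : x = m ↔ y = m') (e2 : m = x' ↔ m' = y') :
    (x = x' ↔ y = y') := by
  constructor
  · rintro rfl
    have hxm : x = m := eq_of_chain R₁ hirr₁ htr₁ h1 h2
    exact (e1.mp hxm).trans (e2.mp hxm.symm)
  · rintro rfl
    have hym : y = m' := eq_of_chain R₂ hirr₂ htr₂ h3 h4
    exact (e1.mpr hym).trans (e2.mpr hym.symm)

lemma transgen_lift {W₁ W₂ : Type} (R₁ : W₁ → W₁ → Prop) (R₂ : W₂ → W₂ → Prop)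
    (hirr₁ : ∀ x, ¬ R₁ x x) (hirr₂ : ∀ x, ¬ R₂ x x)
    (htr₁ : ∀ a b c, R₁ a b → R₁ b c → R₁ a c)
    (htr₂ : ∀ a b c, R₂ a b → R₂ b c → R₂ a c)
    (T₁ : W₁ → W₁ → Prop) (T₂ : W₂ → W₂ → Prop) (Z : W₁ → W₂ → Prop)
    (hsub₁ : ∀ x y, T₁ x y → R₁ x y ∨ x = y)
    (hsub₂ : ∀ x y, T₂ x y → R₂ x y ∨ x = y)
    (hstep : ∀ x y, Z x y → ∀ x', T₁ x x' →
      ∃ y', T₂ y y' ∧ Z x' y' ∧ (x = x' ↔ y = y')) :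
    ∀ x y, Z x y → ∀ x', Relation.TransGen T₁ x x' →
      ∃ y', Relation.TransGen T₂ y y' ∧ Z x' y' ∧ (x = x' ↔ y = y') := by
  intro x y hxy x' h
  induction h with
  | single h =>
    obtain ⟨y', h2, hz, he⟩ := hstep _ _ hxy _ h
    exact ⟨y', Relation.TransGen.single h2, hz, he⟩
  | @tail m x' hxm hmx' ih =>
    obtain ⟨m', hym', hzm, he1⟩ := ih
    obtain ⟨y', h2, hz, he2⟩ := hstep _ _ hzm _ hmx'
    refine ⟨y', hym'.tail h2, hz, ?_⟩
    exact eq_comp R₁ R₂ hirr₁ hirr₂ htr₁ htr₂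
      (transgen_sub R₁ T₁ htr₁ hsub₁ _ _ hxm) (hsub₁ _ _ hmx')
      (transgen_sub R₂ T₂ htr₂ hsub₂ _ _ hym') (hsub₂ _ _ h2) he1 he2

theorem semT_sub {A P W : Type} (S : GStruct A P W) (R : W → W → Prop)
    (hirr : ∀ x, ¬ R x x) (htr : ∀ x y z, R x y → R y z → R x z)
    (ha : ∀ a x y, S.rel a x y → R x y) :
    ∀ (e : Trm A P) (x y : W), semT S e x y → R x y ∨ x = y := by
  intro e
  match e with
  | .tv a => intro x y h; exact Or.inl (ha a x y h)
  | .comp e f =>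
    rintro x z ⟨m, he, hf⟩
    rcases semT_sub S R hirr htr ha e _ _ he with h1 | rfl
    · rcases semT_sub S R hirr htr ha f _ _ hf with h2 | rfl
      · exact Or.inl (htr _ _ _ h1 h2)
      · exact Or.inl h1
    · exact semT_sub S R hirr htr ha f _ _ hf
  | .union e f =>
    rintro x y (h | h)
    · exact semT_sub S R hirr htr ha e _ _ h
    · exact semT_sub S R hirr htr ha f _ _ h
  | .plus e =>
    intro x y h
    exact transgen_sub R _ htr (semT_sub S R hirr htr ha e) _ _ h
  | .adom e => rintro x y ⟨rfl, _⟩; exact Or.inr rfl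
  | .capId e => rintro x y ⟨_, rfl⟩; exact Or.inr rfl
  | .capNid e => rintro x y ⟨h, _⟩; exact semT_sub S R hirr htr ha e _ _ h
  | .test φ => rintro x y ⟨rfl, _⟩; exact Or.inr rfl

mutual

theorem fmlInv {A P W₁ W₂ : Type}
    (S₁ : GStruct A P W₁) (S₂ : GStruct A P W₂)
    (R₁ : W₁ → W₁ → Prop) (R₂ : W₂ → W₂ → Prop)
    (hirr₁ : ∀ x, ¬ R₁ x x) (htr₁ : ∀ a b c, R₁ a b → R₁ b c → R₁ a c)
    (ha₁ : ∀ a x y, S₁.rel a x y → R₁ x y)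
    (hirr₂ : ∀ x, ¬ R₂ x x) (htr₂ : ∀ a b c, R₂ a b → R₂ b c → R₂ a c)
    (ha₂ : ∀ a x y, S₂.rel a x y → R₂ x y)
    (Z : W₁ → W₂ → Prop) (hZ : Bisim S₁ S₂ Z) (φ : Fml A P) :
    ∀ x y, Z x y → (semF S₁ φ x ↔ semF S₂ φ y) := by
  intro x y hxy
  match φ with
  | .pv p =>
    exact (hZ x y hxy).1 p
  | .imp φ ψ =>
    have h1 := fmlInv S₁ S₂ R₁ R₂ hirr₁ htr₁ ha₁ hirr₂ htr₂ ha₂ Z hZ φ x y hxy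
    have h2 := fmlInv S₁ S₂ R₁ R₂ hirr₁ htr₁ ha₁ hirr₂ htr₂ ha₂ Z hZ ψ x y hxy
    simp only [semF]
    exact Iff.intro (fun h hp => h2.mp (h (h1.mpr hp))) (fun h hp => h2.mpr (h (h1.mp hp)))
  | .fls => exact Iff.rfl
  | .box e φ =>
    have he := trmInv S₁ S₂ R₁ R₂ hirr₁ htr₁ ha₁ hirr₂ htr₂ ha₂ Z hZ e
    simp only [semF]
    constructor
    · intro h y' hy'
      obtain ⟨x', hx', hz, _⟩ := (he x y hxy).2 y' hy'
      exact (fmlInv S₁ S₂ R₁ R₂ hirr₁ htr₁ ha₁ hirr₂ htr₂ ha₂ Z hZ φ x' y' hz).mp (h x' hx')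
    · intro h x' hx'
      obtain ⟨y', hy', hz, _⟩ := (he x y hxy).1 x' hx'
      exact (fmlInv S₁ S₂ R₁ R₂ hirr₁ htr₁ ha₁ hirr₂ htr₂ ha₂ Z hZ φ x' y' hz).mpr (h y' hy')

theorem trmInv {A P W₁ W₂ : Type}
    (S₁ : GStruct A P W₁) (S₂ : GStruct A P W₂)
    (R₁ : W₁ → W₁ → Prop) (R₂ : W₂ → W₂ → Prop)
    (hirr₁ : ∀ x, ¬ R₁ x x) (htr₁ : ∀ a b c, R₁ a b → R₁ b c → R₁ a c)
    (ha₁ : ∀ a x y, S₁.rel a x y → R₁ x y)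
    (hirr₂ : ∀ x, ¬ R₂ x x) (htr₂ : ∀ a b c, R₂ a b → R₂ b c → R₂ a c)
    (ha₂ : ∀ a x y, S₂.rel a x y → R₂ x y)
    (Z : W₁ → W₂ → Prop) (hZ : Bisim S₁ S₂ Z) (e : Trm A P) :
    ∀ x y, Z x y →
      (∀ x', semT S₁ e x x' →
        ∃ y', semT S₂ e y y' ∧ Z x' y' ∧ (x = x' ↔ y = y')) ∧
      (∀ y', semT S₂ e y y' →
        ∃ x', semT S₁ e x x' ∧ Z x' y' ∧ (x = x' ↔ y = y')) := by
  intro x y hxy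
  match e with
  | .tv a =>
    constructor
    · intro x' h
      obtain ⟨y', h2, hz⟩ := (hZ x y hxy).2.1 a x' h
      refine ⟨y', h2, hz, ?_⟩
      constructor
      · rintro rfl; exact absurd (ha₁ a x x h) (hirr₁ x)
      · rintro rfl; exact absurd (ha₂ a y y h2) (hirr₂ y)
    · intro y' h
      obtain ⟨x', h2, hz⟩ := (hZ x y hxy).2.2 a y' h
      refine ⟨x', h2, hz, ?_⟩
      constructor
      · rintro rfl; exact absurd (ha₁ a x x h2) (hirr₁ x)
      · rintro rfl; exact absurd (ha₂ a y y h) (hirr₂ y)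
  | .comp e f =>
    have ihe := trmInv S₁ S₂ R₁ R₂ hirr₁ htr₁ ha₁ hirr₂ htr₂ ha₂ Z hZ e
    have ihf := trmInv S₁ S₂ R₁ R₂ hirr₁ htr₁ ha₁ hirr₂ htr₂ ha₂ Z hZ f
    constructor
    · rintro x' ⟨m, he, hf⟩
      obtain ⟨m', hm', hzm, e1⟩ := (ihe x y hxy).1 m he
      obtain ⟨y', hy', hz, e2⟩ := (ihf m m' hzm).1 x' hf
      refine ⟨y', ⟨m', hm', hy'⟩, hz, ?_⟩
      exact eq_comp R₁ R₂ hirr₁ hirr₂ htr₁ htr₂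
        (semT_sub S₁ R₁ hirr₁ htr₁ ha₁ e _ _ he)
        (semT_sub S₁ R₁ hirr₁ htr₁ ha₁ f _ _ hf)
        (semT_sub S₂ R₂ hirr₂ htr₂ ha₂ e _ _ hm')
        (semT_sub S₂ R₂ hirr₂ htr₂ ha₂ f _ _ hy') e1 e2
    · rintro y' ⟨m', he, hf⟩
      obtain ⟨m, hm, hzm, e1⟩ := (ihe x y hxy).2 m' he
      obtain ⟨x', hx', hz, e2⟩ := (ihf m m' hzm).2 y' hf
      refine ⟨x', ⟨m, hm, hx'⟩, hz, ?_⟩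
      exact eq_comp R₁ R₂ hirr₁ hirr₂ htr₁ htr₂
        (semT_sub S₁ R₁ hirr₁ htr₁ ha₁ e _ _ hm)
        (semT_sub S₁ R₁ hirr₁ htr₁ ha₁ f _ _ hx')
        (semT_sub S₂ R₂ hirr₂ htr₂ ha₂ e _ _ he)
        (semT_sub S₂ R₂ hirr₂ htr₂ ha₂ f _ _ hf) e1 e2
  | .union e f =>
    have ihe := trmInv S₁ S₂ R₁ R₂ hirr₁ htr₁ ha₁ hirr₂ htr₂ ha₂ Z hZ e
    have ihf := trmInv S₁ S₂ R₁ R₂ hirr₁ htr₁ ha₁ hirr₂ htr₂ ha₂ Z hZ f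
    constructor
    · rintro x' (h | h)
      · obtain ⟨y', h2, hz, he⟩ := (ihe x y hxy).1 x' h
        exact ⟨y', Or.inl h2, hz, he⟩
      · obtain ⟨y', h2, hz, he⟩ := (ihf x y hxy).1 x' h
        exact ⟨y', Or.inr h2, hz, he⟩
    · rintro y' (h | h)
      · obtain ⟨x', h2, hz, he⟩ := (ihe x y hxy).2 y' h
        exact ⟨x', Or.inl h2, hz, he⟩
      · obtain ⟨x', h2, hz, he⟩ := (ihf x y hxy).2 y' h
        exact ⟨x', Or.inr h2, hz, he⟩
  | .plus e =>
    have ihe := trmInv S₁ S₂ R₁ R₂ hirr₁ htr₁ ha₁ hirr₂ htr₂ ha₂ Z hZ e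
    constructor
    · intro x' h
      exact transgen_lift R₁ R₂ hirr₁ hirr₂ htr₁ htr₂
        (semT S₁ e) (semT S₂ e) Z
        (semT_sub S₁ R₁ hirr₁ htr₁ ha₁ e)
        (semT_sub S₂ R₂ hirr₂ htr₂ ha₂ e)
        (fun u v huv => (ihe u v huv).1) x y hxy x' h
    · intro y' h
      obtain ⟨x', h2, hz, heq⟩ := transgen_lift R₂ R₁ hirr₂ hirr₁ htr₂ htr₁
        (semT S₂ e) (semT S₁ e) (fun v u => Z u v)
        (semT_sub S₂ R₂ hirr₂ htr₂ ha₂ e)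
        (semT_sub S₁ R₁ hirr₁ htr₁ ha₁ e)
        (fun v u huv y'' hy'' => by
          obtain ⟨x'', h2, hz, heq⟩ := (ihe u v huv).2 y'' hy''
          exact ⟨x'', h2, hz, heq.symm⟩) y x hxy y' h
      exact ⟨x', h2, hz, heq.symm⟩
  | .adom e =>
    have ihe := trmInv S₁ S₂ R₁ R₂ hirr₁ htr₁ ha₁ hirr₂ htr₂ ha₂ Z hZ e
    constructor
    · rintro x' ⟨rfl, hne⟩
      refine ⟨y, ⟨rfl, fun z hz => ?_⟩, hxy, by simp⟩
      obtain ⟨x'', h2, _⟩ := (ihe x y hxy).2 z hz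
      exact hne x'' h2
    · rintro y' ⟨rfl, hne⟩
      refine ⟨x, ⟨rfl, fun z hz => ?_⟩, hxy, by simp⟩
      obtain ⟨y'', h2, _⟩ := (ihe x y hxy).1 z hz
      exact hne y'' h2
  | .capId e =>
    have ihe := trmInv S₁ S₂ R₁ R₂ hirr₁ htr₁ ha₁ hirr₂ htr₂ ha₂ Z hZ e
    constructor
    · rintro x' ⟨he, rfl⟩
      obtain ⟨y', h2, hz, heq⟩ := (ihe x y hxy).1 x he
      exact ⟨y', ⟨h2, heq.mp rfl⟩, hz, heq⟩
    · rintro y' ⟨he, rfl⟩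
      obtain ⟨x', h2, hz, heq⟩ := (ihe x y hxy).2 y he
      exact ⟨x', ⟨h2, heq.mpr rfl⟩, hz, heq⟩
  | .capNid e =>
    have ihe := trmInv S₁ S₂ R₁ R₂ hirr₁ htr₁ ha₁ hirr₂ htr₂ ha₂ Z hZ e
    constructor
    · rintro x' ⟨he, hne⟩
      obtain ⟨y', h2, hz, heq⟩ := (ihe x y hxy).1 x' he
      exact ⟨y', ⟨h2, fun h => hne (heq.mpr h)⟩, hz, heq⟩
    · rintro y' ⟨he, hne⟩
      obtain ⟨x', h2, hz, heq⟩ := (ihe x y hxy).2 y' he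
      exact ⟨x', ⟨h2, fun h => hne (heq.mp h)⟩, hz, heq⟩
  | .test φ =>
    have ihφ := fmlInv S₁ S₂ R₁ R₂ hirr₁ htr₁ ha₁ hirr₂ htr₂ ha₂ Z hZ φ
    constructor
    · rintro x' ⟨rfl, hφ⟩
      exact ⟨y, ⟨rfl, (ihφ x y hxy).mp hφ⟩, hxy, by simp⟩
    · rintro y' ⟨rfl, hφ⟩
      exact ⟨x, ⟨rfl, (ihφ x y hxy).mpr hφ⟩, hxy, by simp⟩

end

end Aux


theorem bisimulation_invariance {A P W₁ W₂ : Type}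
    (S₁ : GStruct A P W₁) (S₂ : GStruct A P W₂)
    (h₁ : StrictPlusId S₁) (h₂ : StrictPlusId S₂)
    (Z : W₁ → W₂ → Prop) (hZ : Bisim S₁ S₂ Z) :
    ∀ x y, Z x y →
      (∀ φ : Fml A P, semF S₁ φ x ↔ semF S₂ φ y) ∧
      (∀ (e : Trm A P) (x' : W₁),
        semT S₁ e x x' → ∃ y', semT S₂ e y y' ∧ Z x' y') ∧
      (∀ (e : Trm A P) (y' : W₂),
        semT S₂ e y y' → ∃ x', semT S₁ e x x' ∧ Z x' y') := by
  obtain ⟨R₁, hirr₁, htr₁, _, ha₁⟩ := h₁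
  obtain ⟨R₂, hirr₂, htr₂, _, ha₂⟩ := h₂
  intro x y hxy
  refine ⟨fun φ => fmlInv S₁ S₂ R₁ R₂ hirr₁ htr₁ ha₁ hirr₂ htr₂ ha₂ Z hZ φ x y hxy,
    fun e x' h => ?_, fun e y' h => ?_⟩
  · obtain ⟨y', h2, hz, _⟩ :=
      (trmInv S₁ S₂ R₁ R₂ hirr₁ htr₁ ha₁ hirr₂ htr₂ ha₂ Z hZ e x y hxy).1 x' h
    exact ⟨y', h2, hz⟩
  · obtain ⟨x', h2, hz, _⟩ :=
      (trmInv S₁ S₂ R₁ R₂ hirr₁ htr₁ ha₁ hirr₂ htr₂ ha₂ Z hZ e x y hxy).2 y' h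
    exact ⟨x', h2, hz⟩
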